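/- arXiv:2012.13888 — 2 statements merged into one kernel-verified Lean document; each statement's English description precedes it below -/
import Mathlib

section
/- Let ρ : ℝ → ℝ be C¹ with ρ⁻ < ρ(x) < ρ⁺ for all x (where 0 < ρ⁻ < ρ⁺) and ρ' > 0, and let u(x) = ū⁻ + ∫_{ρ⁻}^{ρ(x)} √(p'(s))/s ds, with ū⁺ := ū⁻ + ∫_{ρ⁻}^{ρ⁺} √(p'(s))/s ds. Define σ(x) = (ρ(x) − ρ⁻)/(ρ⁺ − ρ⁻) and η(x) = (u(x) − ū⁻)/(ū⁺ − ū⁻). Then there exists a constant C > 0, depending only on γ, ρ⁻, ρ⁺, such that |σ(x) − η(x)| ≤ C (ρ⁺ − ρ⁻) σ(x)(1 − σ(x)) for all x ∈ ℝ. -/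
/-!
Write `g(s) = √(p'(s))/s`, `a = ρ - ρ⁻`, `b = ρ⁺ - ρ`, `F₁ = ∫_{ρ⁻}^{ρ} g`, `F₂ = ∫_{ρ}^{ρ⁺} g`,
so that `σ = a/(a+b)` and `η = F₁/(F₁+F₂)`. On the compact interval `[ρ⁻, ρ⁺]` the integrand
is continuous and pinched between constants `0 < m ≤ M`, hence `F₁ ∈ [m a, M a]` and
`F₂ ∈ [m b, M b]`. Then `σ - η = (a F₂ - b F₁)/((a+b)(F₁+F₂))`, whose numerator is at most
`M a b` and whose denominator is at least `m (a+b)²`, so `C = M / (m (ρ⁺ - ρ⁻))` works.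
-/

open Set intervalIntegral

theorem abs_div_add_sub_div_add_le {a b F₁ F₂ m M : ℝ} (ha : 0 < a) (hb : 0 < b) (hm : 0 < m)
    (hF₁ : F₁ ∈ Icc (m * a) (M * a)) (hF₂ : F₂ ∈ Icc (m * b) (M * b)) :
    |a / (a + b) - F₁ / (F₁ + F₂)| ≤ M / m * (a / (a + b) * (b / (a + b))) := by
  obtain ⟨hF₁m, hF₁M⟩ := hF₁
  obtain ⟨hF₂m, hF₂M⟩ := hF₂
  have hF : m * (a + b) ≤ F₁ + F₂ := by linarith
  have hF_pos : 0 < F₁ + F₂ := by nlinarith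
  have hnum : |a * F₂ - b * F₁| ≤ M * (a * b) := by
    have hmab : 0 < m * a * b := by positivity
    rw [abs_le]
    constructor <;> nlinarith [mul_le_mul_of_nonneg_left hF₂M ha.le,
      mul_le_mul_of_nonneg_left hF₁M hb.le, mul_le_mul_of_nonneg_left hF₁m hb.le,
      mul_le_mul_of_nonneg_left hF₂m ha.le]
  have hM : 0 ≤ M := by nlinarith
  calc |a / (a + b) - F₁ / (F₁ + F₂)|
      = |a * F₂ - b * F₁| / ((a + b) * (F₁ + F₂)) := by
        rw [div_sub_div _ _ (by positivity) hF_pos.ne', abs_div,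
          abs_of_pos (mul_pos (add_pos ha hb) hF_pos)]
        ring_nf
    _ ≤ M * (a * b) / ((a + b) * (m * (a + b))) := by gcongr
    _ = M / m * (a / (a + b) * (b / (a + b))) := by field_simp

theorem intervalIntegral.integral_mem_Icc_mul_sub {f : ℝ → ℝ} {a b m M : ℝ} (hab : a ≤ b)
    (hf : IntervalIntegrable f MeasureTheory.volume a b) (hfab : MapsTo f (Icc a b) (Icc m M)) :
    ∫ s in a..b, f s ∈ Icc (m * (b - a)) (M * (b - a)) := by
  have hlow := integral_mono_on hab intervalIntegrable_const hf fun s hs => (hfab hs).1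
  have hupp := integral_mono_on hab hf intervalIntegrable_const fun s hs => (hfab hs).2
  rw [integral_const, smul_eq_mul] at hlow hupp
  constructor <;> linarith

theorem ContinuousOn.exists_pos_mapsTo_Icc {f : ℝ → ℝ} {a b : ℝ} (hab : a ≤ b)
    (hf : ContinuousOn f (Icc a b)) (hpos : ∀ s ∈ Icc a b, 0 < f s) :
    ∃ m M, 0 < m ∧ MapsTo f (Icc a b) (Icc m M) := by
  have hne : (Icc a b).Nonempty := nonempty_Icc.mpr hab
  obtain ⟨s₀, hs₀, hmin⟩ := isCompact_Icc.exists_isMinOn hne hf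
  obtain ⟨s₁, -, hmax⟩ := isCompact_Icc.exists_isMaxOn hne hf
  exact ⟨f s₀, f s₁, hpos s₀ hs₀, fun s hs => ⟨hmin hs, hmax hs⟩⟩

theorem abs_div_sub_div_integral_le {g : ℝ → ℝ} {lo hi r m M : ℝ} (hr : r ∈ Ioo lo hi)
    (hg : IntervalIntegrable g MeasureTheory.volume lo hi) (hm : 0 < m)
    (hbounds : MapsTo g (Icc lo hi) (Icc m M)) :
    |(r - lo) / (hi - lo) - (∫ s in lo..r, g s) / ∫ s in lo..hi, g s| ≤
      M / m * ((r - lo) / (hi - lo) * (1 - (r - lo) / (hi - lo))) := by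
  obtain ⟨hlo, hhi⟩ := hr
  have hg₁ : IntervalIntegrable g MeasureTheory.volume lo r :=
    hg.mono_set (uIcc_subset_uIcc_left (mem_uIcc_of_le hlo.le hhi.le))
  have hg₂ : IntervalIntegrable g MeasureTheory.volume r hi :=
    hg.mono_set (uIcc_subset_uIcc_right (mem_uIcc_of_le hlo.le hhi.le))
  have h₁ := integral_mem_Icc_mul_sub hlo.le hg₁
    (hbounds.mono_left (Icc_subset_Icc le_rfl hhi.le))
  have h₂ := integral_mem_Icc_mul_sub hhi.le hg₂
    (hbounds.mono_left (Icc_subset_Icc hlo.le le_rfl))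
  have key := abs_div_add_sub_div_add_le (sub_pos.2 hlo) (sub_pos.2 hhi) hm h₁ h₂
  rw [integral_add_adjacent_intervals hg₁ hg₂, sub_add_sub_cancel'] at key
  rwa [one_sub_div (sub_pos.2 (hlo.trans hhi)).ne', sub_sub_sub_cancel_right]

theorem continuousOn_sqrt_mul_rpow_div (γ : ℝ) :
    ContinuousOn (fun s : ℝ => √(γ * s ^ (γ - 1)) / s) (Ioi 0) := fun s hs =>
  ((continuousAt_const.mul (Real.continuousAt_rpow_const s _ (Or.inl (ne_of_gt hs)))).sqrt.div
    continuousAt_id (ne_of_gt hs)).continuousWithinAt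

theorem sqrt_mul_rpow_div_pos {γ s : ℝ} (hγ : 0 < γ) (hs : 0 < s) :
    0 < √(γ * s ^ (γ - 1)) / s :=
  div_pos (Real.sqrt_pos.2 (mul_pos hγ (Real.rpow_pos_of_pos hs _))) hs

theorem sigma_eta_difference_bound_general
    (γ : ℝ) (hγ : 1 ≤ γ) (ρm ρp um : ℝ) (hρm : 0 < ρm) (hρ : ρm < ρp)
    (ρ : ℝ → ℝ)
    (hrange : ∀ x, ρ x ∈ Set.Ioo ρm ρp)
    (u : ℝ → ℝ)
    (hu : ∀ x, u x = um + ∫ s in ρm..(ρ x), Real.sqrt (γ * s ^ (γ - 1)) / s)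
    (up : ℝ)
    (hup : up = um + ∫ s in ρm..ρp, Real.sqrt (γ * s ^ (γ - 1)) / s)
    (σ η : ℝ → ℝ)
    (hσ : ∀ x, σ x = (ρ x - ρm) / (ρp - ρm))
    (hη : ∀ x, η x = (u x - um) / (up - um)) :
    ∃ C > 0, ∀ x : ℝ, |σ x - η x| ≤ C * (ρp - ρm) * (σ x * (1 - σ x)) := by
  have hg : ContinuousOn (fun s : ℝ => √(γ * s ^ (γ - 1)) / s) (Icc ρm ρp) :=
    (continuousOn_sqrt_mul_rpow_div γ).mono fun s hs => hρm.trans_le hs.1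
  obtain ⟨m, M, hm, hbounds⟩ := hg.exists_pos_mapsTo_Icc hρ.le fun s hs =>
    sqrt_mul_rpow_div_pos (by linarith) (hρm.trans_le hs.1)
  have hM : 0 < M := hm.trans_le (nonempty_Icc.1 ⟨_, hbounds (left_mem_Icc.2 hρ.le)⟩)
  refine ⟨M / m / (ρp - ρm), div_pos (div_pos hM hm) (sub_pos.2 hρ), fun x => ?_⟩
  rw [hσ x, hη x, hu x, hup, add_sub_cancel_left, add_sub_cancel_left,
    div_mul_cancel₀ _ (sub_pos.2 hρ).ne']
  exact abs_div_sub_div_integral_le (hrange x) (hg.intervalIntegrable_of_Icc hρ.le) hm hbounds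

/-- Along a monotone density profile `ρ(x) ∈ (ρ⁻, ρ⁺)` with
`u(x) = ū⁻ + ∫_{ρ⁻}^{ρ(x)} √(p'(s))/s ds`, `p(s) = s^γ`, the normalized profiles
`σ = (ρ−ρ⁻)/(ρ⁺−ρ⁻)` and `η = (u−ū⁻)/(ū⁺−ū⁻)` satisfy
`|σ − η| ≤ C (ρ⁺−ρ⁻) σ(1−σ)`. -/
theorem sigma_eta_difference_bound
    (γ : ℝ) (hγ : 1 ≤ γ) (ρm ρp um : ℝ) (hρm : 0 < ρm) (hρ : ρm < ρp)
    (ρ : ℝ → ℝ) (hρC1 : ContDiff ℝ 1 ρ)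
    (hrange : ∀ x, ρ x ∈ Set.Ioo ρm ρp) (hmono : ∀ x, 0 < deriv ρ x)
    (u : ℝ → ℝ)
    (hu : ∀ x, u x = um + ∫ s in ρm..(ρ x), Real.sqrt (γ * s ^ (γ - 1)) / s)
    (up : ℝ)
    (hup : up = um + ∫ s in ρm..ρp, Real.sqrt (γ * s ^ (γ - 1)) / s)
    (σ η : ℝ → ℝ)
    (hσ : ∀ x, σ x = (ρ x - ρm) / (ρp - ρm))
    (hη : ∀ x, η x = (u x - um) / (up - um)) :
    ∃ C > 0, ∀ x : ℝ, |σ x - η x| ≤ C * (ρp - ρm) * (σ x * (1 - σ x)) :=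
  sigma_eta_difference_bound_general γ hγ ρm ρp um hρm hρ ρ hrange u hu up hup σ η hσ hη
end

section
/- Let A : [ρ⁻, ρ⁺] → ℝ be C², with A' ≥ c > 0 and |A''| ≤ M on [ρ⁻, ρ⁺]. For r ∈ [ρ⁻, ρ⁺] set σ = (r − ρ⁻)/(ρ⁺ − ρ⁻) and η = (A(r) − A(ρ⁻))/(A(ρ⁺) − A(ρ⁻)). Then |σ − η| ≤ (M/c)(ρ⁺ − ρ⁻) σ(1 − σ). -/
/-!
Apply the mean value theorem on `[ρ⁻, r]` and on `[r, ρ⁺]`: this writes the numerator of `σ - η`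
as `(r - ρ⁻)(ρ⁺ - r)(A'(ξ₂) - A'(ξ₁))`, and `|A'(ξ₂) - A'(ξ₁)| ≤ M (ρ⁺ - ρ⁻)` by the mean value
inequality for `A'`. The denominator `(ρ⁺ - ρ⁻)(A(ρ⁺) - A(ρ⁻))` is at least `c (ρ⁺ - ρ⁻)²`.
-/

open Set

section ChordDefect

variable {f : ℝ → ℝ} {a b r M : ℝ}

/-- `(r - a)(f b - f a) - (b - a)(f r - f a)` is `b - a` times the height of the chord of `f`
over `[a, b]` above `f r`. -/
theorem exists_chord_defect_eq_mul_deriv_sub (har : a < r) (hrb : r < b)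
    (hf : ContinuousOn f (Icc a b)) (hf' : DifferentiableOn ℝ f (Ioo a b)) :
    ∃ ξ₁ ∈ Ioo a r, ∃ ξ₂ ∈ Ioo r b,
      (r - a) * (f b - f a) - (b - a) * (f r - f a)
        = (r - a) * (b - r) * (deriv f ξ₂ - deriv f ξ₁) := by
  obtain ⟨ξ₁, hξ₁, hslope₁⟩ := exists_deriv_eq_slope f har
    (hf.mono (Icc_subset_Icc le_rfl hrb.le)) (hf'.mono (Ioo_subset_Ioo le_rfl hrb.le))
  obtain ⟨ξ₂, hξ₂, hslope₂⟩ := exists_deriv_eq_slope f hrb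
    (hf.mono (Icc_subset_Icc har.le le_rfl)) (hf'.mono (Ioo_subset_Ioo har.le le_rfl))
  refine ⟨ξ₁, hξ₁, ξ₂, hξ₂, ?_⟩
  rw [hslope₁, hslope₂]
  field_simp [(sub_pos.2 har).ne', (sub_pos.2 hrb).ne']
  ring

theorem abs_chord_defect_le (hr : r ∈ Icc a b)
    (hf : ContinuousOn f (Icc a b)) (hf' : DifferentiableOn ℝ f (Ioo a b))
    (hf'' : ∀ x ∈ Ioo a b, DifferentiableAt ℝ (deriv f) x)
    (hM : ∀ x ∈ Ioo a b, |deriv (deriv f) x| ≤ M) :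
    |(r - a) * (f b - f a) - (b - a) * (f r - f a)| ≤ M * (b - a) * ((r - a) * (b - r)) := by
  rcases hr.1.eq_or_lt with rfl | har
  · simp
  rcases hr.2.eq_or_lt with rfl | hrb
  · simp
  obtain ⟨ξ₁, hξ₁, ξ₂, hξ₂, hdefect⟩ := exists_chord_defect_eq_mul_deriv_sub har hrb hf hf'
  have hξ₁' : ξ₁ ∈ Ioo a b := ⟨hξ₁.1, hξ₁.2.trans hrb⟩
  have hξ₂' : ξ₂ ∈ Ioo a b := ⟨har.trans hξ₂.1, hξ₂.2⟩
  have hderiv : |deriv f ξ₂ - deriv f ξ₁| ≤ M * |ξ₂ - ξ₁| :=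
    (convex_Ioo a b).norm_image_sub_le_of_norm_deriv_le hf'' hM hξ₁' hξ₂'
  have hgap : |ξ₂ - ξ₁| ≤ b - a := by
    rw [abs_le]
    constructor <;> linarith [hξ₁.1, hξ₁.2, hξ₂.1, hξ₂.2]
  have hM₀ : 0 ≤ M := (abs_nonneg _).trans (hM ξ₁ hξ₁')
  have hpos : 0 ≤ (r - a) * (b - r) := by nlinarith
  calc |(r - a) * (f b - f a) - (b - a) * (f r - f a)|
      = (r - a) * (b - r) * |deriv f ξ₂ - deriv f ξ₁| := by
        rw [hdefect, abs_mul, abs_of_nonneg hpos]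
    _ ≤ (r - a) * (b - r) * (M * (b - a)) := by
        gcongr
        exact hderiv.trans (mul_le_mul_of_nonneg_left hgap hM₀)
    _ = M * (b - a) * ((r - a) * (b - r)) := by ring

end ChordDefect

theorem normalized_difference_second_derivative_bound_general
    (ρm ρp c M : ℝ) (hρ : ρm < ρp) (hc : 0 < c)
    (A : ℝ → ℝ) (hA : ContDiffOn ℝ 2 A (Set.Icc ρm ρp))
    (hA' : ∀ s ∈ Set.Icc ρm ρp, c ≤ deriv A s)
    (hA'' : ∀ s ∈ Set.Icc ρm ρp, |deriv (deriv A) s| ≤ M)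
    (r : ℝ) (hr : r ∈ Set.Icc ρm ρp)
    (σ η : ℝ) (hσ : σ = (r - ρm) / (ρp - ρm))
    (hη : η = (A r - A ρm) / (A ρp - A ρm)) :
    |σ - η| ≤ (M / c) * (ρp - ρm) * (σ * (1 - σ)) := by
  have hL : 0 < ρp - ρm := sub_pos.2 hρ
  have hA₁ : DifferentiableOn ℝ A (Ioo ρm ρp) :=
    (hA.mono Ioo_subset_Icc_self).differentiableOn (by norm_num)
  have hA₂ : ∀ x ∈ Ioo ρm ρp, DifferentiableAt ℝ (deriv A) x := fun x hx =>
    (((hA.mono Ioo_subset_Icc_self).deriv_of_isOpen (m := 1) isOpen_Ioo (by norm_num)).differentiableOn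
      one_ne_zero x hx).differentiableAt (isOpen_Ioo.mem_nhds hx)
  have hrise : c * (ρp - ρm) ≤ A ρp - A ρm := by
    exact (convex_Icc ρm ρp).mul_sub_le_image_sub_of_le_deriv hA.continuousOn
      (by rwa [interior_Icc]) (fun x hx => hA' x (interior_subset hx))
      ρm (left_mem_Icc.2 hρ.le) ρp (right_mem_Icc.2 hρ.le) hρ.le
  have hD : 0 < A ρp - A ρm := (mul_pos hc hL).trans_le hrise
  have hdefect := abs_chord_defect_le hr hA.continuousOn hA₁ hA₂
    (fun x hx => hA'' x (Ioo_subset_Icc_self hx))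
  calc |σ - η|
      = |(r - ρm) * (A ρp - A ρm) - (ρp - ρm) * (A r - A ρm)| / ((ρp - ρm) * (A ρp - A ρm)) := by
        rw [hσ, hη, div_sub_div _ _ hL.ne' hD.ne', abs_div, abs_of_pos (mul_pos hL hD)]
    _ ≤ M * (ρp - ρm) * ((r - ρm) * (ρp - r)) / ((ρp - ρm) * (c * (ρp - ρm))) := by
        refine div_le_div₀ ((abs_nonneg _).trans hdefect) hdefect (by positivity) ?_
        gcongr
    _ = (M / c) * (ρp - ρm) * (σ * (1 - σ)) := by
        rw [hσ]
        field_simp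
        ring

/-- For `A` of class `C²` on `[ρ⁻,ρ⁺]` with `A' ≥ c > 0` and `|A''| ≤ M`, the
normalized variables `σ = (r−ρ⁻)/(ρ⁺−ρ⁻)`, `η = (A(r)−A(ρ⁻))/(A(ρ⁺)−A(ρ⁻))`
satisfy `|σ − η| ≤ (M/c)(ρ⁺−ρ⁻)σ(1−σ)`. -/
theorem normalized_difference_second_derivative_bound
    (ρm ρp c M : ℝ) (hρm : 0 < ρm) (hρ : ρm < ρp) (hc : 0 < c)
    (A : ℝ → ℝ) (hA : ContDiffOn ℝ 2 A (Set.Icc ρm ρp))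
    (hA' : ∀ s ∈ Set.Icc ρm ρp, c ≤ deriv A s)
    (hA'' : ∀ s ∈ Set.Icc ρm ρp, |deriv (deriv A) s| ≤ M)
    (r : ℝ) (hr : r ∈ Set.Icc ρm ρp)
    (σ η : ℝ) (hσ : σ = (r - ρm) / (ρp - ρm))
    (hη : η = (A r - A ρm) / (A ρp - A ρm)) :
    |σ - η| ≤ (M / c) * (ρp - ρm) * (σ * (1 - σ)) :=
  normalized_difference_second_derivative_bound_general ρm ρp c M hρ hc A hA hA' hA'' r hr σ η hσ hη
end
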